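/- arXiv:1412.0913 — 5 statements merged into one kernel-verified Lean document; each statement's English description precedes it below -/
import Mathlib

section
/- Let V be a finite-dimensional real inner product space, A : V → V a self-adjoint positive semidefinite linear operator, Λ > 0 with ⟨A v, v⟩ ≤ Λ ⟨v, v⟩ for all v ∈ V, and G = id − Λ⁻¹ A. Suppose Q : V → V is a linear operator satisfying the approximation property ‖v − Q v‖ ≤ C_A ‖A v‖ for all v ∈ V, for some constant C_A > 0. For m₁, m₂ ∈ ℕ let E = G^{m₂} ∘ (id − Q) ∘ G^{m₁} be the two-level error propagation operator with m₁ pre- and m₂ post-smoothing steps. Then for every v ∈ V, ⟨A (E v), E v⟩ ≤ C_A² Λ² (1 + 2 m₁)⁻¹ (1 + 2 m₂)⁻¹ ⟨A v, v⟩; in particular, the energy-norm error reduction factor of the two-level method is at most C_A Λ ((1 + 2 m₁)(1 + 2 m₂))^{−1/2}. -/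
/-!
In an orthonormal eigenbasis of `A` (eigenvalues `μ ∈ [0, Λ]`) the Richardson smoother
`G = id - Λ⁻¹ A` acts diagonally by `1 - μ / Λ`, and Bernoulli's inequality gives the smoothing
property `μ (1 - μ / Λ) ^ (2m) ≤ Λ / (1 + 2m)`. Hence post-smoothing bounds the energy of
`G^m₂ w` by `Λ / (1 + 2m₂) ‖w‖²`, pre-smoothing bounds `‖A G^m₁ v‖²` by
`Λ / (1 + 2m₁) ⟪A v, v⟫`, and the approximation property links the two through
`w = (id - Q) G^m₁ v`.
-/

open scoped RealInnerProductSpace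

theorem succ_mul_mul_one_sub_pow_le_one {t : ℝ} (h0 : 0 ≤ t) (h1 : t ≤ 1) (k : ℕ) :
    (k + 1) * t * (1 - t) ^ k ≤ 1 := by
  have hpow : 0 ≤ (1 - t) ^ k := pow_nonneg (by linarith) k
  have hbernoulli : 1 + k * t ≤ (1 + t) ^ k := one_add_mul_le_pow (by linarith) k
  calc (k + 1) * t * (1 - t) ^ k ≤ (1 + k * t) * (1 - t) ^ k := by gcongr; linarith
    _ ≤ (1 + t) ^ k * (1 - t) ^ k := by gcongr
    _ = (1 - t ^ 2) ^ k := by rw [← mul_pow]; ring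
    _ ≤ 1 := pow_le_one₀ (by nlinarith) (by nlinarith)

theorem mul_one_sub_div_pow_le_div {μ Λ : ℝ} (hμ : 0 ≤ μ) (hμΛ : μ ≤ Λ) (k : ℕ) :
    μ * (1 - μ / Λ) ^ k ≤ Λ / (k + 1) := by
  rcases (hμ.trans hμΛ).eq_or_lt with rfl | hΛ
  · simp [le_antisymm hμΛ hμ]
  have h := succ_mul_mul_one_sub_pow_le_one (div_nonneg hμ hΛ.le) ((div_le_one hΛ).2 hμΛ) k
  rw [le_div_iff₀ (by positivity)]
  calc μ * (1 - μ / Λ) ^ k * (k + 1) = Λ * ((k + 1) * (μ / Λ) * (1 - μ / Λ) ^ k) := by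
        field_simp
    _ ≤ Λ := mul_le_of_le_one_right hΛ.le h

namespace OrthonormalBasis

variable {ι V : Type*} [Fintype ι] [NormedAddCommGroup V] [InnerProductSpace ℝ V]
  (b : OrthonormalBasis ι ℝ V)

theorem real_inner_eq_sum_repr_mul_repr (x y : V) : ⟪x, y⟫ = ∑ i, b.repr x i * b.repr y i := by
  simp only [b.repr_apply_apply, ← b.sum_inner_mul_inner x y, real_inner_comm x]

theorem repr_pow_apply_of_repr_apply {T : V →ₗ[ℝ] V} {d : ι → ℝ}
    (hT : ∀ x i, b.repr (T x) i = d i * b.repr x i) (m : ℕ) (x : V) (i : ι) :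
    b.repr ((T ^ m) x) i = d i ^ m * b.repr x i := by
  induction m with
  | zero => simp
  | succ m ih => rw [pow_succ', Module.End.mul_apply, hT, ih, pow_succ']; ring

end OrthonormalBasis

section Richardson

variable {V : Type*} [NormedAddCommGroup V] [InnerProductSpace ℝ V]

noncomputable def richardsonSmoother (A : V →ₗ[ℝ] V) (Λ : ℝ) : V →ₗ[ℝ] V :=
  LinearMap.id - Λ⁻¹ • A

namespace LinearMap.IsSymmetric

variable [FiniteDimensional ℝ V] {A : V →ₗ[ℝ] V}

section Eigenbasis

variable (hA : A.IsSymmetric) {n : ℕ} (hn : Module.finrank ℝ V = n)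

theorem real_inner_apply_eigenvectorBasis (i : Fin n) :
    ⟪A (hA.eigenvectorBasis hn i), hA.eigenvectorBasis hn i⟫ = hA.eigenvalues hn i := by
  simp [real_inner_smul_left]

theorem eigenvalues_nonneg (hA_pos : ∀ v, 0 ≤ ⟪A v, v⟫) (i : Fin n) :
    0 ≤ hA.eigenvalues hn i :=
  hA.real_inner_apply_eigenvectorBasis hn i ▸ hA_pos _

theorem eigenvalues_le {Λ : ℝ} (hΛ_ub : ∀ v, ⟪A v, v⟫ ≤ Λ * ⟪v, v⟫) (i : Fin n) :
    hA.eigenvalues hn i ≤ Λ := by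
  have h := hΛ_ub (hA.eigenvectorBasis hn i)
  rwa [hA.real_inner_apply_eigenvectorBasis, real_inner_self_eq_norm_sq,
    OrthonormalBasis.norm_eq_one, one_pow, mul_one] at h

theorem eigenvalues_mul_one_sub_div_pow_le {Λ : ℝ} (hA_pos : ∀ v, 0 ≤ ⟪A v, v⟫)
    (hΛ_ub : ∀ v, ⟪A v, v⟫ ≤ Λ * ⟪v, v⟫) (m : ℕ) (i : Fin n) :
    hA.eigenvalues hn i * (1 - hA.eigenvalues hn i / Λ) ^ (2 * m) ≤ Λ / (1 + 2 * m) := by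
  have h := mul_one_sub_div_pow_le_div (hA.eigenvalues_nonneg hn hA_pos i)
    (hA.eigenvalues_le hn hΛ_ub i) (2 * m)
  push_cast at h
  rwa [add_comm]

theorem eigenvectorBasis_repr_richardsonSmoother_pow_apply (Λ : ℝ) (m : ℕ) (x : V) (i : Fin n) :
    (hA.eigenvectorBasis hn).repr ((richardsonSmoother A Λ ^ m) x) i =
      (1 - hA.eigenvalues hn i / Λ) ^ m * (hA.eigenvectorBasis hn).repr x i := by
  refine (hA.eigenvectorBasis hn).repr_pow_apply_of_repr_apply
    (d := fun j => 1 - hA.eigenvalues hn j / Λ) (fun y j => ?_) m x i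
  simp [richardsonSmoother, hA.eigenvectorBasis_apply_self_apply]
  ring

end Eigenbasis

theorem inner_apply_richardsonSmoother_pow_le (hA : A.IsSymmetric) {Λ : ℝ}
    (hA_pos : ∀ v, 0 ≤ ⟪A v, v⟫) (hΛ_ub : ∀ v, ⟪A v, v⟫ ≤ Λ * ⟪v, v⟫) (m : ℕ) (w : V) :
    ⟪A ((richardsonSmoother A Λ ^ m) w), (richardsonSmoother A Λ ^ m) w⟫ ≤
      Λ / (1 + 2 * m) * ‖w‖ ^ 2 := by
  set b := hA.eigenvectorBasis rfl
  set μ := hA.eigenvalues rfl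
  rw [← real_inner_self_eq_norm_sq, b.real_inner_eq_sum_repr_mul_repr,
    b.real_inner_eq_sum_repr_mul_repr, Finset.mul_sum]
  refine Finset.sum_le_sum fun i _ => ?_
  rw [hA.eigenvectorBasis_apply_self_apply, hA.eigenvectorBasis_repr_richardsonSmoother_pow_apply]
  calc μ i * ((1 - μ i / Λ) ^ m * b.repr w i) * ((1 - μ i / Λ) ^ m * b.repr w i)
      = μ i * (1 - μ i / Λ) ^ (2 * m) * (b.repr w i * b.repr w i) := by ring
    _ ≤ Λ / (1 + 2 * m) * (b.repr w i * b.repr w i) := by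
      gcongr
      · exact mul_self_nonneg _
      · exact hA.eigenvalues_mul_one_sub_div_pow_le rfl hA_pos hΛ_ub m i

theorem norm_apply_richardsonSmoother_pow_sq_le (hA : A.IsSymmetric) {Λ : ℝ}
    (hA_pos : ∀ v, 0 ≤ ⟪A v, v⟫) (hΛ_ub : ∀ v, ⟪A v, v⟫ ≤ Λ * ⟪v, v⟫) (m : ℕ) (v : V) :
    ‖A ((richardsonSmoother A Λ ^ m) v)‖ ^ 2 ≤ Λ / (1 + 2 * m) * ⟪A v, v⟫ := by
  set b := hA.eigenvectorBasis rfl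
  set μ := hA.eigenvalues rfl
  rw [← real_inner_self_eq_norm_sq, b.real_inner_eq_sum_repr_mul_repr,
    b.real_inner_eq_sum_repr_mul_repr, Finset.mul_sum]
  refine Finset.sum_le_sum fun i _ => ?_
  rw [hA.eigenvectorBasis_apply_self_apply, hA.eigenvectorBasis_repr_richardsonSmoother_pow_apply,
    hA.eigenvectorBasis_apply_self_apply]
  calc μ i * ((1 - μ i / Λ) ^ m * b.repr v i) * (μ i * ((1 - μ i / Λ) ^ m * b.repr v i))
      = μ i * (1 - μ i / Λ) ^ (2 * m) * (μ i * b.repr v i * b.repr v i) := by ring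
    _ ≤ Λ / (1 + 2 * m) * (μ i * b.repr v i * b.repr v i) := by
      gcongr
      · rw [mul_assoc]
        exact mul_nonneg (hA.eigenvalues_nonneg rfl hA_pos i) (mul_self_nonneg _)
      · exact hA.eigenvalues_mul_one_sub_div_pow_le rfl hA_pos hΛ_ub m i

end LinearMap.IsSymmetric

end Richardson

theorem two_level_energy_contraction_general
    {V : Type*} [NormedAddCommGroup V] [InnerProductSpace ℝ V] [FiniteDimensional ℝ V]
    (A : V →ₗ[ℝ] V) (hA : LinearMap.IsSymmetric A)
    (hA_pos : ∀ v : V, 0 ≤ ⟪A v, v⟫)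
    (Λ : ℝ) (hΛ : 0 < Λ) (hΛ_ub : ∀ v : V, ⟪A v, v⟫ ≤ Λ * ⟪v, v⟫)
    (G : V →ₗ[ℝ] V) (hG : G = LinearMap.id - Λ⁻¹ • A)
    (Q : V →ₗ[ℝ] V) (C_A : ℝ)
    (happrox : ∀ v : V, ‖v - Q v‖ ≤ C_A * ‖A v‖)
    (m₁ m₂ : ℕ)
    (E : V →ₗ[ℝ] V) (hE : E = (G ^ m₂) ∘ₗ (LinearMap.id - Q) ∘ₗ (G ^ m₁))
    (v : V) :
    ⟪A (E v), E v⟫ ≤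
      C_A ^ 2 * Λ ^ 2 * (1 + 2 * (m₁ : ℝ))⁻¹ * (1 + 2 * (m₂ : ℝ))⁻¹ * ⟪A v, v⟫ := by
  obtain rfl : G = richardsonSmoother A Λ := hG
  subst hE
  set u := (richardsonSmoother A Λ ^ m₁) v
  have happrox_sq : ‖u - Q u‖ ^ 2 ≤ C_A ^ 2 * ‖A u‖ ^ 2 := by
    rw [← mul_pow]
    exact pow_le_pow_left₀ (norm_nonneg _) (happrox u) 2
  calc ⟪A ((richardsonSmoother A Λ ^ m₂) (u - Q u)), (richardsonSmoother A Λ ^ m₂) (u - Q u)⟫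
      ≤ Λ / (1 + 2 * m₂) * ‖u - Q u‖ ^ 2 :=
        hA.inner_apply_richardsonSmoother_pow_le hA_pos hΛ_ub m₂ _
    _ ≤ Λ / (1 + 2 * m₂) * (C_A ^ 2 * ‖A u‖ ^ 2) := by gcongr
    _ ≤ Λ / (1 + 2 * m₂) * (C_A ^ 2 * (Λ / (1 + 2 * m₁) * ⟪A v, v⟫)) := by
        gcongr
        exact hA.norm_apply_richardsonSmoother_pow_sq_le hA_pos hΛ_ub m₁ v
    _ = C_A ^ 2 * Λ ^ 2 * (1 + 2 * (m₁ : ℝ))⁻¹ * (1 + 2 * (m₂ : ℝ))⁻¹ * ⟪A v, v⟫ := by ring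

/-- Two-level convergence: let `A` be a self-adjoint positive semidefinite operator on a
finite-dimensional real inner product space, `Λ > 0` with `⟪A v, v⟫ ≤ Λ ⟪v, v⟫` for all `v`,
`G = id - Λ⁻¹ • A`, and let `Q` satisfy the approximation property `‖v - Q v‖ ≤ C_A ‖A v‖`.
Then the two-level error propagation operator `E = G^m₂ ∘ (id - Q) ∘ G^m₁` satisfies
`⟪A (E v), E v⟫ ≤ C_A² Λ² (1 + 2m₁)⁻¹ (1 + 2m₂)⁻¹ ⟪A v, v⟫` for every `v`. -/
theorem two_level_energy_contraction
    {V : Type*} [NormedAddCommGroup V] [InnerProductSpace ℝ V] [FiniteDimensional ℝ V]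
    (A : V →ₗ[ℝ] V) (hA : LinearMap.IsSymmetric A)
    (hA_pos : ∀ v : V, 0 ≤ ⟪A v, v⟫)
    (Λ : ℝ) (hΛ : 0 < Λ) (hΛ_ub : ∀ v : V, ⟪A v, v⟫ ≤ Λ * ⟪v, v⟫)
    (G : V →ₗ[ℝ] V) (hG : G = LinearMap.id - Λ⁻¹ • A)
    (Q : V →ₗ[ℝ] V) (C_A : ℝ) (hC_A : 0 < C_A)
    (happrox : ∀ v : V, ‖v - Q v‖ ≤ C_A * ‖A v‖)
    (m₁ m₂ : ℕ)
    (E : V →ₗ[ℝ] V) (hE : E = (G ^ m₂) ∘ₗ (LinearMap.id - Q) ∘ₗ (G ^ m₁))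
    (v : V) :
    ⟪A (E v), E v⟫ ≤
      C_A ^ 2 * Λ ^ 2 * (1 + 2 * (m₁ : ℝ))⁻¹ * (1 + 2 * (m₂ : ℝ))⁻¹ * ⟪A v, v⟫ :=
  two_level_energy_contraction_general A hA hA_pos Λ hΛ hΛ_ub G hG Q C_A happrox m₁ m₂ E hE v
end

section
/- Let V_c and V be finite-dimensional real inner product spaces, A : V → V and A_c : V_c → V_c self-adjoint positive semidefinite linear operators, Λ > 0 with ⟨A v, v⟩ ≤ Λ ⟨v, v⟩ for all v ∈ V, and G = id − Λ⁻¹ A. Let I_c : V_c → V and P : V → V_c be linear operators and assume: (i) prolongation stability ⟨A (I_c w), I_c w⟩ ≤ C_stab² ⟨A_c w, w⟩ for all w ∈ V_c; (ii) projection stability ⟨A_c (P v), P v⟩ ≤ C_stab² ⟨A v, v⟩ for all v ∈ V; (iii) the approximation property ‖v − I_c (P v)‖ ≤ C_A ‖A v‖ for all v ∈ V; (iv) the coarse-level error operator E_c : V_c → V_c satisfies ⟨A_c (E_c w), E_c w⟩ ≤ δ² ⟨A_c w, w⟩ for all w ∈ V_c, for some δ ≥ 0. For m₁, m₂ ∈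 ℕ define the W-cycle error propagation operator E = G^{m₂} ∘ (id − I_c ∘ (id − E_c ∘ E_c) ∘ P) ∘ G^{m₁}. Then for every v ∈ V, √⟨A (E v), E v⟩ ≤ ( C_A Λ ((1 + 2 m₁)(1 + 2 m₂))^{−1/2} + C_stab² δ² ) √⟨A v, v⟩. -/
/-!
With `u = G^m₁ v`, the error splits as `E v = G^m₂ (u - I_c (P u)) + G^m₂ (I_c (E_c² (P u)))`,
and the energy seminorm `√⟪A ·, ·⟫` satisfies the triangle inequality. The Richardson smoother
`G = 1 - Λ⁻¹ A` is symmetric and commutes with `A`, and both `G` and `A G` are positive because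
`‖A x‖² ≤ Λ ⟪A x, x⟫`; hence `T G^j` is positive for `T ∈ {1, A}` and the smoothing property
`(2m+1) ⟪T (1 - G) G^m x, G^m x⟫ ≤ ⟪T x, x⟫` holds. Using it with `T = 1` after `m₂` steps, the
approximation property, and with `T = A` after `m₁` steps bounds the first term by
`C_A Λ ((2m₁+1)(2m₂+1))^(-1/2) √⟪A v, v⟫`. The second term is controlled by stability of `I_c`
and `P`, two applications of the coarse contraction and energy nonexpansiveness of `G`.
-/

open scoped RealInnerProductSpace

namespace LinearMap

variable {E : Type*} [NormedAddCommGroup E] [InnerProductSpace ℝ E]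

theorem IsPositive.inner_sq_le {A : E →ₗ[ℝ] E} (hA : A.IsPositive) (x y : E) :
    ⟪A x, y⟫ ^ 2 ≤ ⟪A x, x⟫ * ⟪A y, y⟫ :=
  BilinForm.apply_mul_apply_le_of_forall_zero_le ((innerₗ E).comp A) hA.inner_nonneg_left x y
    |>.trans_eq' (by simp [sq, hA.isSymmetric y x, real_inner_comm])

theorem IsPositive.inner_le_sqrt_mul_sqrt {A : E →ₗ[ℝ] E} (hA : A.IsPositive) (x y : E) :
    ⟪A x, y⟫ ≤ √⟪A x, x⟫ * √⟪A y, y⟫ := by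
  rw [← Real.sqrt_mul (hA.inner_nonneg_left x)]
  exact (le_abs_self _).trans (Real.abs_le_sqrt (hA.inner_sq_le x y))

theorem IsPositive.sqrt_inner_add_le {A : E →ₗ[ℝ] E} (hA : A.IsPositive) (x y : E) :
    √⟪A (x + y), x + y⟫ ≤ √⟪A x, x⟫ + √⟪A y, y⟫ := by
  have hx := Real.sq_sqrt (hA.inner_nonneg_left x)
  have hy := Real.sq_sqrt (hA.inner_nonneg_left y)
  have expand : ⟪A (x + y), x + y⟫ = ⟪A x, x⟫ + 2 * ⟪A x, y⟫ + ⟪A y, y⟫ := by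
    simp only [map_add, inner_add_left, inner_add_right, hA.isSymmetric y x,
      real_inner_comm y (A x)]
    ring
  refine Real.sqrt_le_iff.mpr ⟨by positivity, ?_⟩
  nlinarith [hA.inner_le_sqrt_mul_sqrt x y]

theorem IsSymmetric.inner_mul_mul_self_apply {D : E →ₗ[ℝ] E} (hD : D.IsSymmetric)
    (R : E →ₗ[ℝ] E) (x : E) : ⟪(D * R * D) x, x⟫ = ⟪R (D x), D x⟫ :=
  hD (R (D x)) x

variable {T S : E →ₗ[ℝ] E}

theorem IsSymmetric.inner_mul_pow_two_mul_apply (hS : S.IsSymmetric) (hcomm : Commute T S)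
    (k : ℕ) (x : E) : ⟪(T * S ^ (2 * k)) x, x⟫ = ⟪T ((S ^ k) x), (S ^ k) x⟫ := by
  rw [two_mul, pow_add, ← mul_assoc, (hcomm.pow_right k).eq, (hS.pow k).inner_mul_mul_self_apply]

-- `T S^(2k) = S^k T S^k` and `T S^(2k+1) = S^k (T S) S^k`.
theorem inner_mul_pow_nonneg (hS : S.IsSymmetric) (hcomm : Commute T S)
    (hT : ∀ x, 0 ≤ ⟪T x, x⟫) (hTS : ∀ x, 0 ≤ ⟪(T * S) x, x⟫) (j : ℕ) (x : E) :
    0 ≤ ⟪(T * S ^ j) x, x⟫ := by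
  obtain ⟨k, rfl | rfl⟩ := Nat.even_or_odd' j
  · rw [hS.inner_mul_pow_two_mul_apply hcomm]
    exact hT _
  · rw [pow_succ', ← mul_assoc, hS.inner_mul_pow_two_mul_apply (hcomm.mul_left (Commute.refl S))]
    exact hTS _

theorem antitone_inner_mul_one_sub_mul_pow (hS : S.IsSymmetric) (hcomm : Commute T S)
    (hT : ∀ x, 0 ≤ ⟪T x, x⟫) (hTS : ∀ x, 0 ≤ ⟪(T * S) x, x⟫) (x : E) :
    Antitone fun j : ℕ ↦ ⟪(T * (1 - S) * S ^ j) x, x⟫ := by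
  refine antitone_nat_of_succ_le fun j ↦ sub_nonneg.mp ?_
  have hD : (1 - S).IsSymmetric := IsSymmetric.id.sub hS
  have step : T * (1 - S) * S ^ j - T * (1 - S) * S ^ (j + 1) =
      (1 - S) * (T * S ^ j) * (1 - S) := by
    rw [pow_succ, ← mul_assoc, ← mul_one_sub, ((Commute.one_right T).sub_right hcomm).eq]
    simp only [mul_assoc]
  rw [← inner_sub_left, ← LinearMap.sub_apply, step, hD.inner_mul_mul_self_apply]
  exact inner_mul_pow_nonneg hS hcomm hT hTS j _

theorem inner_mul_one_sub_pow_le (hS : S.IsSymmetric) (hcomm : Commute T S)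
    (hT : ∀ x, 0 ≤ ⟪T x, x⟫) (hTS : ∀ x, 0 ≤ ⟪(T * S) x, x⟫) (m : ℕ) (x : E) :
    ⟪(T * (1 - S)) ((S ^ m) x), (S ^ m) x⟫ ≤ ⟪(T * (1 - S)) x, x⟫ := by
  have hcomm' : Commute (T * (1 - S)) S :=
    hcomm.mul_left ((Commute.one_left S).sub_left (Commute.refl S))
  rw [← hS.inner_mul_pow_two_mul_apply hcomm']
  simpa using antitone_inner_mul_one_sub_mul_pow hS hcomm hT hTS x (Nat.zero_le (2 * m))

-- Telescoping `(1 - S) ∑_{j ≤ 2m} S^j = 1 - S^(2m+1)`; the last of the `2m+1` decreasing terms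
-- is the smallest.
theorem smoothing_property (hS : S.IsSymmetric) (hcomm : Commute T S)
    (hT : ∀ x, 0 ≤ ⟪T x, x⟫) (hTS : ∀ x, 0 ≤ ⟪(T * S) x, x⟫) (m : ℕ) (x : E) :
    (1 + 2 * m) * ⟪(T * (1 - S)) ((S ^ m) x), (S ^ m) x⟫ ≤ ⟪T x, x⟫ := by
  have hcomm' : Commute (T * (1 - S)) S :=
    hcomm.mul_left ((Commute.one_left S).sub_left (Commute.refl S))
  have telescope : ∑ j ∈ Finset.range (2 * m + 1), ⟪(T * (1 - S) * S ^ j) x, x⟫ =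
      ⟪T x, x⟫ - ⟪(T * S ^ (2 * m + 1)) x, x⟫ := by
    calc _ = ⟪(T * ((1 - S) * ∑ j ∈ Finset.range (2 * m + 1), S ^ j)) x, x⟫ := by
          simp only [Finset.mul_sum, mul_assoc, LinearMap.coe_sum, Finset.sum_apply, sum_inner]
      _ = _ := by rw [mul_neg_geom_sum, mul_sub, mul_one, sub_apply, inner_sub_left]
  have lower := Finset.card_nsmul_le_sum (Finset.range (2 * m + 1)) _ _ fun j hj ↦
    antitone_inner_mul_one_sub_mul_pow hS hcomm hT hTS x
      (Nat.lt_succ_iff.mp (Finset.mem_range.mp hj))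
  rw [Finset.card_range, nsmul_eq_mul, telescope] at lower
  rw [← hS.inner_mul_pow_two_mul_apply hcomm']
  push_cast at lower
  linarith [inner_mul_pow_nonneg hS hcomm hT hTS (2 * m + 1) x]

end LinearMap

section Richardson

variable {E : Type*} [NormedAddCommGroup E] [InnerProductSpace ℝ E] {A : E →ₗ[ℝ] E} {Λ : ℝ}

noncomputable def richardson (A : E →ₗ[ℝ] E) (Λ : ℝ) : E →ₗ[ℝ] E :=
  1 - Λ⁻¹ • A

theorem LinearMap.IsSymmetric.richardson (hA : A.IsSymmetric) : (richardson A Λ).IsSymmetric :=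
  IsSymmetric.id.sub (hA.smul (by simp))

theorem commute_richardson : Commute A (richardson A Λ) :=
  (Commute.one_right A).sub_right ((Commute.refl A).smul_right _)

theorem one_sub_richardson : 1 - richardson A Λ = Λ⁻¹ • A :=
  sub_sub_cancel _ _

variable (hΛ : 0 < Λ) (hAΛ : ∀ x, ⟪A x, x⟫ ≤ Λ * ⟪x, x⟫)
include hΛ hAΛ

theorem inner_richardson_nonneg (x : E) : 0 ≤ ⟪richardson A Λ x, x⟫ := by
  have : Λ⁻¹ * ⟪A x, x⟫ ≤ ⟪x, x⟫ := (inv_mul_le_iff₀ hΛ).mpr (hAΛ x)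
  simp only [richardson, LinearMap.sub_apply, LinearMap.smul_apply, Module.End.one_apply,
    inner_sub_left, real_inner_smul_left]
  linarith

variable (hA : A.IsPositive)
include hA

theorem LinearMap.IsPositive.inner_apply_apply_le (x : E) : ⟪A x, A x⟫ ≤ Λ * ⟪A x, x⟫ := by
  have hcs : ⟪A x, A x⟫ ^ 2 ≤ ⟪A x, x⟫ * (Λ * ⟪A x, A x⟫) :=
    (hA.inner_sq_le x (A x)).trans (by gcongr; exacts [hA.inner_nonneg_left x, hAΛ (A x)])
  nlinarith [hA.inner_nonneg_left x, mul_nonneg hΛ.le (hA.inner_nonneg_left x)]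

theorem inner_mul_richardson_nonneg (x : E) : 0 ≤ ⟪(A * richardson A Λ) x, x⟫ := by
  have : Λ⁻¹ * ⟪A x, A x⟫ ≤ ⟪A x, x⟫ :=
    (inv_mul_le_iff₀ hΛ).mpr (hA.inner_apply_apply_le hΛ hAΛ x)
  simp only [richardson, mul_sub, mul_one, mul_smul_comm, LinearMap.sub_apply,
    LinearMap.smul_apply, Module.End.mul_apply, inner_sub_left, real_inner_smul_left,
    hA.isSymmetric (A x) x]
  linarith

theorem richardson_smoothing (m : ℕ) (x : E) :
    (1 + 2 * m) * ⟪A ((richardson A Λ ^ m) x), (richardson A Λ ^ m) x⟫ ≤ Λ * ⟪x, x⟫ := by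
  have h := LinearMap.smoothing_property (hA.isSymmetric.richardson) (Commute.one_left _)
    (fun _ ↦ real_inner_self_nonneg) (by simpa using inner_richardson_nonneg hΛ hAΛ) m x
  simp only [one_mul, one_sub_richardson, LinearMap.smul_apply, real_inner_smul_left,
    Module.End.one_apply] at h
  calc _ = Λ * ((1 + 2 * m) *
        (Λ⁻¹ * ⟪A ((richardson A Λ ^ m) x), (richardson A Λ ^ m) x⟫)) := by field_simp
    _ ≤ Λ * ⟪x, x⟫ := by gcongr

theorem richardson_smoothing_energy (m : ℕ) (x : E) :
    (1 + 2 * m) * ‖A ((richardson A Λ ^ m) x)‖ ^ 2 ≤ Λ * ⟪A x, x⟫ := by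
  have h := LinearMap.smoothing_property (hA.isSymmetric.richardson) commute_richardson
    hA.inner_nonneg_left (inner_mul_richardson_nonneg hΛ hAΛ hA) m x
  simp only [one_sub_richardson, mul_smul_comm, LinearMap.smul_apply, Module.End.mul_apply,
    real_inner_smul_left] at h
  rw [hA.isSymmetric, real_inner_self_eq_norm_sq] at h
  calc _ = Λ * ((1 + 2 * m) * (Λ⁻¹ * ‖A ((richardson A Λ ^ m) x)‖ ^ 2)) := by
        field_simp
    _ ≤ Λ * ⟪A x, x⟫ := by gcongr

theorem inner_richardson_pow_le (m : ℕ) (x : E) :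
    ⟪A ((richardson A Λ ^ m) x), (richardson A Λ ^ m) x⟫ ≤ ⟪A x, x⟫ := by
  have h := LinearMap.inner_mul_one_sub_pow_le (hA.isSymmetric.richardson) (Commute.one_left _)
    (fun _ ↦ real_inner_self_nonneg) (by simpa using inner_richardson_nonneg hΛ hAΛ) m x
  simp only [one_mul, one_sub_richardson, LinearMap.smul_apply, real_inner_smul_left] at h
  exact le_of_mul_le_mul_left h (inv_pos.mpr hΛ)

theorem two_level_energy_le {C : ℝ} (m₁ m₂ : ℕ) (v w : E)
    (hw : ‖w‖ ≤ C * ‖A ((richardson A Λ ^ m₁) v)‖) :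
    (1 + 2 * m₁) * (1 + 2 * m₂) * ⟪A ((richardson A Λ ^ m₂) w), (richardson A Λ ^ m₂) w⟫ ≤
      (C * Λ) ^ 2 * ⟪A v, v⟫ := by
  have hw2 : ‖w‖ ^ 2 ≤ C ^ 2 * ‖A ((richardson A Λ ^ m₁) v)‖ ^ 2 := by
    rw [← mul_pow]
    exact pow_le_pow_left₀ (norm_nonneg w) hw 2
  calc _ = (1 + 2 * m₁) * ((1 + 2 * m₂) *
        ⟪A ((richardson A Λ ^ m₂) w), (richardson A Λ ^ m₂) w⟫) := by ring
    _ ≤ (1 + 2 * m₁) * (Λ * ‖w‖ ^ 2) := by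
        rw [← real_inner_self_eq_norm_sq]
        exact mul_le_mul_of_nonneg_left (richardson_smoothing hΛ hAΛ hA m₂ w) (by positivity)
    _ ≤ (1 + 2 * m₁) * (Λ * (C ^ 2 * ‖A ((richardson A Λ ^ m₁) v)‖ ^ 2)) := by gcongr
    _ = C ^ 2 * Λ * ((1 + 2 * m₁) * ‖A ((richardson A Λ ^ m₁) v)‖ ^ 2) := by ring
    _ ≤ C ^ 2 * Λ * (Λ * ⟪A v, v⟫) :=
        mul_le_mul_of_nonneg_left (richardson_smoothing_energy hΛ hAΛ hA m₁ v) (by positivity)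
    _ = (C * Λ) ^ 2 * ⟪A v, v⟫ := by ring

theorem coarse_correction_energy_le {V_c : Type*} [NormedAddCommGroup V_c]
    [InnerProductSpace ℝ V_c] {A_c M : V_c →ₗ[ℝ] V_c} {I_c : V_c →ₗ[ℝ] E} {P : E →ₗ[ℝ] V_c}
    {C ε : ℝ} (hI : ∀ w, ⟪A (I_c w), I_c w⟫ ≤ C ^ 2 * ⟪A_c w, w⟫)
    (hP : ∀ v, ⟪A_c (P v), P v⟫ ≤ C ^ 2 * ⟪A v, v⟫)
    (hM : ∀ w, ⟪A_c (M w), M w⟫ ≤ ε ^ 2 * ⟪A_c w, w⟫) (m₁ m₂ : ℕ) (v : E) :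
    ⟪A ((richardson A Λ ^ m₂) (I_c (M (P ((richardson A Λ ^ m₁) v))))),
        (richardson A Λ ^ m₂) (I_c (M (P ((richardson A Λ ^ m₁) v))))⟫ ≤
      (C ^ 2 * ε) ^ 2 * ⟪A v, v⟫ := by
  set u := (richardson A Λ ^ m₁) v
  calc _ ≤ ⟪A (I_c (M (P u))), I_c (M (P u))⟫ := inner_richardson_pow_le hΛ hAΛ hA m₂ _
    _ ≤ C ^ 2 * (ε ^ 2 * (C ^ 2 * ⟪A u, u⟫)) := by
        refine (hI _).trans ?_
        gcongr
        exact (hM _).trans (by gcongr; exact hP u)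
    _ ≤ C ^ 2 * (ε ^ 2 * (C ^ 2 * ⟪A v, v⟫)) := by
        gcongr
        exact inner_richardson_pow_le hΛ hAΛ hA m₁ v
    _ = (C ^ 2 * ε) ^ 2 * ⟪A v, v⟫ := by ring

end Richardson

theorem Real.sqrt_le_mul_sqrt_of_le_sq_mul {a b K : ℝ} (hK : 0 ≤ K) (h : a ≤ K ^ 2 * b) :
    √a ≤ K * √b :=
  calc √a ≤ √(K ^ 2 * b) := Real.sqrt_le_sqrt h
    _ = K * √b := by rw [Real.sqrt_mul (sq_nonneg K), Real.sqrt_sq hK]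

theorem Real.mul_rpow_neg_half_sq {N : ℝ} (hN : 0 ≤ N) (c : ℝ) :
    (c * N ^ (-(1 / 2 : ℝ))) ^ 2 = c ^ 2 / N := by
  rw [mul_pow, ← Real.rpow_mul_natCast hN]
  norm_num [Real.rpow_neg_one, div_eq_mul_inv]

theorem wcycle_energy_contraction_general
    {V_c : Type*} [NormedAddCommGroup V_c] [InnerProductSpace ℝ V_c]
    {V : Type*} [NormedAddCommGroup V] [InnerProductSpace ℝ V]
    (A : V →ₗ[ℝ] V) (hA : LinearMap.IsSymmetric A)
    (hA_pos : ∀ v : V, 0 ≤ ⟪A v, v⟫)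
    (A_c : V_c →ₗ[ℝ] V_c)
    (Λ : ℝ) (hΛ : 0 < Λ) (hΛ_ub : ∀ v : V, ⟪A v, v⟫ ≤ Λ * ⟪v, v⟫)
    (G : V →ₗ[ℝ] V) (hG : G = LinearMap.id - Λ⁻¹ • A)
    (I_c : V_c →ₗ[ℝ] V) (P : V →ₗ[ℝ] V_c)
    (C_stab : ℝ)
    (hI_stab : ∀ w : V_c, ⟪A (I_c w), I_c w⟫ ≤ C_stab ^ 2 * ⟪A_c w, w⟫)
    (hP_stab : ∀ v : V, ⟪A_c (P v), P v⟫ ≤ C_stab ^ 2 * ⟪A v, v⟫)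
    (C_A : ℝ) (hC_A : 0 < C_A)
    (happrox : ∀ v : V, ‖v - I_c (P v)‖ ≤ C_A * ‖A v‖)
    (E_c : V_c →ₗ[ℝ] V_c) (δ : ℝ)
    (hE_c : ∀ w : V_c, ⟪A_c (E_c w), E_c w⟫ ≤ δ ^ 2 * ⟪A_c w, w⟫)
    (m₁ m₂ : ℕ)
    (E : V →ₗ[ℝ] V)
    (hE : E = (G ^ m₂) ∘ₗ
      (LinearMap.id - I_c ∘ₗ (LinearMap.id - E_c ∘ₗ E_c) ∘ₗ P) ∘ₗ (G ^ m₁))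
    (v : V) :
    Real.sqrt ⟪A (E v), E v⟫ ≤
      (C_A * Λ * ((1 + 2 * (m₁ : ℝ)) * (1 + 2 * (m₂ : ℝ))) ^ (-(1 / 2 : ℝ)) +
        C_stab ^ 2 * δ ^ 2) * Real.sqrt ⟪A v, v⟫ := by
  obtain rfl : G = richardson A Λ := hG
  have hA' : A.IsPositive := A.isPositive_iff.mpr ⟨hA, hA_pos⟩
  have hEE : ∀ w, ⟪A_c (E_c (E_c w)), E_c (E_c w)⟫ ≤ (δ ^ 2) ^ 2 * ⟪A_c w, w⟫ := fun w ↦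
    (hE_c _).trans (by rw [sq (δ ^ 2), mul_assoc]; gcongr; exact hE_c w)
  set u := (richardson A Λ ^ m₁) v
  have hEv : E v = (richardson A Λ ^ m₂) (u - I_c (P u)) +
      (richardson A Λ ^ m₂) (I_c ((E_c ∘ₗ E_c) (P u))) := by
    rw [hE, ← map_add, LinearMap.comp_apply, LinearMap.comp_apply]
    congr 1
    simp only [LinearMap.comp_apply, LinearMap.sub_apply, LinearMap.id_apply, map_sub, u]
    abel
  rw [hEv, add_mul]
  refine (hA'.sqrt_inner_add_le _ _).trans (add_le_add ?_ ?_)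
  · refine Real.sqrt_le_mul_sqrt_of_le_sq_mul (by positivity) ?_
    rw [Real.mul_rpow_neg_half_sq (by positivity), div_mul_eq_mul_div,
      le_div_iff₀' (by positivity)]
    exact two_level_energy_le hΛ hΛ_ub hA' m₁ m₂ v _ (happrox u)
  · refine Real.sqrt_le_mul_sqrt_of_le_sq_mul (by positivity) ?_
    exact coarse_correction_energy_le hΛ hΛ_ub hA' hI_stab hP_stab hEE m₁ m₂ v

/-- W-cycle inductive step: with `A`, `A_c` self-adjoint positive semidefinite on the fine and
coarse spaces, `Λ > 0` a spectral bound for `A`, `G = id - Λ⁻¹ • A` the Richardson smoother,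
prolongation `I_c` and projection `P` stable in the energy norms with constant `C_stab`,
approximation property `‖v - I_c (P v)‖ ≤ C_A ‖A v‖`, and a coarse-level error operator `E_c`
that is a `δ`-contraction in the coarse energy norm, the W-cycle error propagation operator
`E = G^m₂ ∘ (id - I_c ∘ (id - E_c ∘ E_c) ∘ P) ∘ G^m₁` satisfies
`√⟪A (E v), E v⟫ ≤ (C_A Λ ((1+2m₁)(1+2m₂))^(-1/2) + C_stab² δ²) √⟪A v, v⟫`. -/
theorem wcycle_energy_contraction
    {V_c : Type*} [NormedAddCommGroup V_c] [InnerProductSpace ℝ V_c] [FiniteDimensional ℝ V_c]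
    {V : Type*} [NormedAddCommGroup V] [InnerProductSpace ℝ V] [FiniteDimensional ℝ V]
    (A : V →ₗ[ℝ] V) (hA : LinearMap.IsSymmetric A)
    (hA_pos : ∀ v : V, 0 ≤ ⟪A v, v⟫)
    (A_c : V_c →ₗ[ℝ] V_c) (hA_c : LinearMap.IsSymmetric A_c)
    (hA_c_pos : ∀ w : V_c, 0 ≤ ⟪A_c w, w⟫)
    (Λ : ℝ) (hΛ : 0 < Λ) (hΛ_ub : ∀ v : V, ⟪A v, v⟫ ≤ Λ * ⟪v, v⟫)
    (G : V →ₗ[ℝ] V) (hG : G = LinearMap.id - Λ⁻¹ • A)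
    (I_c : V_c →ₗ[ℝ] V) (P : V →ₗ[ℝ] V_c)
    (C_stab : ℝ)
    (hI_stab : ∀ w : V_c, ⟪A (I_c w), I_c w⟫ ≤ C_stab ^ 2 * ⟪A_c w, w⟫)
    (hP_stab : ∀ v : V, ⟪A_c (P v), P v⟫ ≤ C_stab ^ 2 * ⟪A v, v⟫)
    (C_A : ℝ) (hC_A : 0 < C_A)
    (happrox : ∀ v : V, ‖v - I_c (P v)‖ ≤ C_A * ‖A v‖)
    (E_c : V_c →ₗ[ℝ] V_c) (δ : ℝ) (hδ : 0 ≤ δ)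
    (hE_c : ∀ w : V_c, ⟪A_c (E_c w), E_c w⟫ ≤ δ ^ 2 * ⟪A_c w, w⟫)
    (m₁ m₂ : ℕ)
    (E : V →ₗ[ℝ] V)
    (hE : E = (G ^ m₂) ∘ₗ
      (LinearMap.id - I_c ∘ₗ (LinearMap.id - E_c ∘ₗ E_c) ∘ₗ P) ∘ₗ (G ^ m₁))
    (v : V) :
    Real.sqrt ⟪A (E v), E v⟫ ≤
      (C_A * Λ * ((1 + 2 * (m₁ : ℝ)) * (1 + 2 * (m₂ : ℝ))) ^ (-(1 / 2 : ℝ)) +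
        C_stab ^ 2 * δ ^ 2) * Real.sqrt ⟪A v, v⟫ :=
  wcycle_energy_contraction_general A hA hA_pos A_c Λ hΛ hΛ_ub G hG I_c P C_stab hI_stab hP_stab C_A
    hC_A happrox E_c δ hE_c m₁ m₂ E hE v
end

section
/- Let V be a finite-dimensional real inner product space, A : V → V a self-adjoint positive semidefinite linear operator, Λ > 0 with ⟨A v, v⟩ ≤ Λ ⟨v, v⟩ for all v ∈ V, and G = id − Λ⁻¹ A. Then for all natural numbers s, t with t < s, every m ∈ ℕ, and every v ∈ V, ⟨A^s (G^m v), G^m v⟩ ≤ Λ^{s−t} · ( (s−t) / ((s−t) + 2m) )^{s−t} · ⟨A^t v, v⟩. In particular, writing |||v|||_s = √⟨A^s v, v⟩, one has |||G^m v|||_s ≤ Λ^{(s−t)/2} (1+m)^{(t−s)/2} (s−t)^{(s−t)/2} |||v|||_t. -/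
/-!
Diagonalize `A` in an orthonormal eigenbasis `eᵢ` with eigenvalues `μᵢ ∈ [0, Λ]`; then `G` is
diagonal with eigenvalues `1 - μᵢ / Λ`, and with `cᵢ = ⟪eᵢ, v⟫` both sides become sums:
`∑ μᵢ ^ s (1 - μᵢ / Λ) ^ (2m) cᵢ²` and `Λ ^ k (k / (k + 2m)) ^ k ∑ μᵢ ^ t cᵢ²`, where `k = s - t`.
The comparison is termwise and reduces to `x ^ k (1 - x) ^ n ≤ (k / (k + n)) ^ k` on `[0, 1]`,
the maximum of the left side being attained at `x = k / (k + n)`.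
-/

open scoped RealInnerProductSpace

/-- Weighted AM-GM with integer weights, from `c ≤ exp (c - 1)`. -/
theorem pow_mul_pow_le_one_of_mul_add_mul_eq {a b : ℝ} (k n : ℕ) (ha : 0 ≤ a) (hb : 0 ≤ b)
    (hab : k * a + n * b = k + n) : a ^ k * b ^ n ≤ 1 := by
  have hexp {c : ℝ} (hc : 0 ≤ c) (j : ℕ) : c ^ j ≤ Real.exp (j * (c - 1)) := by
    rw [Real.exp_nat_mul]
    gcongr
    linarith [Real.add_one_le_exp (c - 1)]
  calc a ^ k * b ^ n ≤ Real.exp (k * (a - 1)) * Real.exp (n * (b - 1)) := by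
        gcongr
        exacts [hexp ha k, hexp hb n]
    _ = 1 := by rw [← Real.exp_add, Real.exp_eq_one_iff]; linarith

theorem pow_mul_one_sub_pow_le_div_pow_mul_div_pow {x : ℝ} {k n : ℕ} (hk : 0 < k) (hn : 0 < n)
    (hx : x ∈ Set.Icc (0 : ℝ) 1) :
    x ^ k * (1 - x) ^ n ≤ (k / (k + n) : ℝ) ^ k * (n / (k + n) : ℝ) ^ n := by
  have hK : (0 : ℝ) < k := Nat.cast_pos.2 hk
  have hN : (0 : ℝ) < n := Nat.cast_pos.2 hn
  have hx₀ : 0 ≤ x := hx.1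
  have hx₁ : 0 ≤ 1 - x := sub_nonneg.2 hx.2
  set a := x * (k + n) / k
  set b := (1 - x) * (k + n) / n
  have hab : a ^ k * b ^ n ≤ 1 := by
    refine pow_mul_pow_le_one_of_mul_add_mul_eq k n (by positivity) (by positivity) ?_
    simp only [a, b]
    field_simp
    ring
  have hxa : x = k / (k + n) * a := by simp only [a]; field_simp
  have hxb : 1 - x = n / (k + n) * b := by simp only [b]; field_simp
  calc x ^ k * (1 - x) ^ n
      = (k / (k + n) : ℝ) ^ k * (n / (k + n) : ℝ) ^ n * (a ^ k * b ^ n) := by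
        rw [hxb, hxa, mul_pow, mul_pow, mul_mul_mul_comm]
    _ ≤ (k / (k + n) : ℝ) ^ k * (n / (k + n) : ℝ) ^ n :=
        mul_le_of_le_one_right (by positivity) hab

theorem pow_mul_one_sub_pow_le_div_pow {x : ℝ} {k : ℕ} (n : ℕ) (hk : 0 < k)
    (hx : x ∈ Set.Icc (0 : ℝ) 1) :
    x ^ k * (1 - x) ^ n ≤ (k / (k + n) : ℝ) ^ k := by
  rcases n.eq_zero_or_pos with rfl | hn
  · simpa [(Nat.cast_pos.2 hk : (0 : ℝ) < k).ne'] using pow_le_one₀ hx.1 hx.2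
  calc x ^ k * (1 - x) ^ n ≤ (k / (k + n) : ℝ) ^ k * (n / (k + n) : ℝ) ^ n :=
        pow_mul_one_sub_pow_le_div_pow_mul_div_pow hk hn hx
    _ ≤ (k / (k + n) : ℝ) ^ k := by
        refine mul_le_of_le_one_right (by positivity) (pow_le_one₀ (by positivity) ?_)
        rw [div_le_one (by positivity)]
        linarith [(Nat.cast_nonneg k : (0 : ℝ) ≤ k)]

theorem pow_add_mul_one_sub_inv_mul_pow_le {Λ μ : ℝ} (hΛ : 0 < Λ) (hμ : μ ∈ Set.Icc 0 Λ)
    (t : ℕ) {k : ℕ} (hk : 0 < k) (n : ℕ) :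
    μ ^ (t + k) * (1 - Λ⁻¹ * μ) ^ n ≤ Λ ^ k * (k / (k + n) : ℝ) ^ k * μ ^ t := by
  have hx : Λ⁻¹ * μ ∈ Set.Icc (0 : ℝ) 1 :=
    ⟨mul_nonneg (inv_nonneg.2 hΛ.le) hμ.1, by rw [inv_mul_le_iff₀ hΛ, mul_one]; exact hμ.2⟩
  have hμΛ : μ ^ k = Λ ^ k * (Λ⁻¹ * μ) ^ k := by
    rw [← mul_pow, mul_inv_cancel_left₀ hΛ.ne']
  have hμ₀ : 0 ≤ μ := hμ.1
  calc μ ^ (t + k) * (1 - Λ⁻¹ * μ) ^ n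
      = Λ ^ k * ((Λ⁻¹ * μ) ^ k * (1 - Λ⁻¹ * μ) ^ n) * μ ^ t := by rw [pow_add, hμΛ]; ring
    _ ≤ Λ ^ k * (k / (k + n) : ℝ) ^ k * μ ^ t := by
      gcongr
      exact pow_mul_one_sub_pow_le_div_pow n hk hx

theorem Module.End.HasEigenvector.id_sub_smul {R M : Type*} [CommRing R] [AddCommGroup M]
    [Module R M] {A : Module.End R M} {μ : R} {x : M} (hx : A.HasEigenvector μ x) (c : R) :
    Module.End.HasEigenvector (LinearMap.id - c • A) (1 - c * μ) x := by
  refine ⟨Module.End.mem_eigenspace_iff.2 ?_, hx.2⟩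
  rw [LinearMap.sub_apply, LinearMap.smul_apply, hx.apply_eq_smul, smul_smul, sub_smul, one_smul,
    LinearMap.id_apply]

theorem OrthonormalBasis.inner_apply_apply_eq_sum {V ι : Type*} [NormedAddCommGroup V]
    [InnerProductSpace ℝ V] [Fintype ι] (e : OrthonormalBasis ι ℝ V) {T S : V →ₗ[ℝ] V}
    {f g : ι → ℝ} (hT : ∀ i, T (e i) = f i • e i) (hS : ∀ i, S (e i) = g i • e i) (v : V) :
    ⟪T v, S v⟫ = ∑ i, f i * g i * ⟪e i, v⟫ ^ 2 := by
  have hdiag {R : V →ₗ[ℝ] V} {h : ι → ℝ} (hR : ∀ i, R (e i) = h i • e i) :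
      R v = ∑ i, (h i * ⟪e i, v⟫) • e i := by
    conv_lhs => rw [← e.sum_repr' v]
    simp only [map_sum, map_smul, hR, smul_smul, mul_comm]
  rw [hdiag hT, hdiag hS, e.orthonormal.inner_sum]
  exact Finset.sum_congr rfl fun i _ => by simp only [conj_trivial]; ring

theorem LinearMap.IsSymmetric.eigenvalues_mem_Icc {V : Type*} [NormedAddCommGroup V]
    [InnerProductSpace ℝ V] [FiniteDimensional ℝ V] {A : V →ₗ[ℝ] V} (hA : A.IsSymmetric)
    {n : ℕ} (hn : Module.finrank ℝ V = n) {Λ : ℝ} (hpos : ∀ v, 0 ≤ ⟪A v, v⟫)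
    (hub : ∀ v, ⟪A v, v⟫ ≤ Λ * ⟪v, v⟫) (i : Fin n) : hA.eigenvalues hn i ∈ Set.Icc 0 Λ := by
  have hone := inner_self_eq_one_of_norm_eq_one (𝕜 := ℝ) ((hA.eigenvectorBasis hn).orthonormal.1 i)
  have h₀ := hpos (hA.eigenvectorBasis hn i)
  have h₁ := hub (hA.eigenvectorBasis hn i)
  simp only [(hA.hasEigenvector_eigenvectorBasis hn i).apply_eq_smul, real_inner_smul_left, hone,
    mul_one] at h₀ h₁
  exact ⟨h₀, h₁⟩

/-- General smoothing property: if `A` is a self-adjoint positive semidefinite operator on a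
finite-dimensional real inner product space, `Λ > 0` with `⟪A v, v⟫ ≤ Λ ⟪v, v⟫` for all `v`,
and `G = id - Λ⁻¹ • A`, then for all naturals `t < s`, every `m` and every `v`,
`⟪A^s (G^m v), G^m v⟫ ≤ Λ^(s-t) * ((s-t) / ((s-t) + 2m))^(s-t) * ⟪A^t v, v⟫`. -/
theorem richardson_smoothing_general
    {V : Type*} [NormedAddCommGroup V] [InnerProductSpace ℝ V] [FiniteDimensional ℝ V]
    (A : V →ₗ[ℝ] V) (hA : LinearMap.IsSymmetric A)
    (hA_pos : ∀ v : V, 0 ≤ ⟪A v, v⟫)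
    (Λ : ℝ) (hΛ : 0 < Λ) (hΛ_ub : ∀ v : V, ⟪A v, v⟫ ≤ Λ * ⟪v, v⟫)
    (G : V →ₗ[ℝ] V) (hG : G = LinearMap.id - Λ⁻¹ • A)
    (s t : ℕ) (hts : t < s) (m : ℕ) (v : V) :
    ⟪(A ^ s) ((G ^ m) v), (G ^ m) v⟫ ≤
      Λ ^ (s - t) * (((s - t : ℕ) : ℝ) / (((s - t : ℕ) : ℝ) + 2 * m)) ^ (s - t) *
        ⟪(A ^ t) v, v⟫ := by
  obtain ⟨k, rfl⟩ := Nat.exists_eq_add_of_le hts.le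
  have hk : 0 < k := by omega
  rw [Nat.add_sub_cancel_left]
  set e := hA.eigenvectorBasis rfl
  set μ := hA.eigenvalues rfl
  have hAe (i) : Module.End.HasEigenvector A (μ i) (e i) :=
    hA.hasEigenvector_eigenvectorBasis rfl i
  have hGe (i) : Module.End.HasEigenvector G (1 - Λ⁻¹ * μ i) (e i) :=
    hG ▸ (hAe i).id_sub_smul Λ⁻¹
  have hlhs : ⟪(A ^ (t + k)) ((G ^ m) v), (G ^ m) v⟫ =
      ∑ i, μ i ^ (t + k) * (1 - Λ⁻¹ * μ i) ^ m * (1 - Λ⁻¹ * μ i) ^ m * ⟪e i, v⟫ ^ 2 :=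
    e.inner_apply_apply_eq_sum (T := A ^ (t + k) * G ^ m)
      (fun i => by rw [Module.End.mul_apply, (hGe i).pow_apply, map_smul, (hAe i).pow_apply,
        smul_smul, mul_comm]) (fun i => (hGe i).pow_apply m) v
  have hrhs : ⟪(A ^ t) v, v⟫ = ∑ i, μ i ^ t * 1 * ⟪e i, v⟫ ^ 2 :=
    e.inner_apply_apply_eq_sum (S := LinearMap.id) (fun i => (hAe i).pow_apply t)
      (fun i => (one_smul ℝ (e i)).symm) v
  rw [hlhs, hrhs, Finset.mul_sum]
  refine Finset.sum_le_sum fun i _ => ?_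
  have hbound := pow_add_mul_one_sub_inv_mul_pow_le hΛ
    (hA.eigenvalues_mem_Icc rfl hA_pos hΛ_ub i) t hk (2 * m)
  push_cast at hbound
  calc μ i ^ (t + k) * (1 - Λ⁻¹ * μ i) ^ m * (1 - Λ⁻¹ * μ i) ^ m * ⟪e i, v⟫ ^ 2
      = μ i ^ (t + k) * (1 - Λ⁻¹ * μ i) ^ (2 * m) * ⟪e i, v⟫ ^ 2 := by ring
    _ ≤ Λ ^ k * (k / (k + 2 * m) : ℝ) ^ k * μ i ^ t * ⟪e i, v⟫ ^ 2 := by gcongr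
    _ = Λ ^ k * (k / (k + 2 * m) : ℝ) ^ k * (μ i ^ t * 1 * ⟪e i, v⟫ ^ 2) := by ring
end

section
/- Let V be a finite-dimensional real inner product space, A : V → V a self-adjoint positive semidefinite linear operator, Λ > 0 with ⟨A v, v⟩ ≤ Λ ⟨v, v⟩ for all v ∈ V, and G = id − Λ⁻¹ A. Then for every m ∈ ℕ and every v ∈ V, ⟨A (G^m v), G^m v⟩ ≤ Λ (1 + 2m)⁻¹ ‖v‖². -/
/-!
In an orthonormal eigenbasis of `A`, the operator `Gᵐ A Gᵐ` acts on the eigenvector of `λ` by the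
factor `λ (1 - λ/Λ)^(2m) = Λ t (1 - t)^(2m)` with `t = λ/Λ ∈ [0, 1]`. By Bernoulli's inequality,
`(1 + 2m) t ≤ 1 + 2m t ≤ (1 + t)^(2m)`, so `(1 + 2m) t (1 - t)^(2m) ≤ (1 - t²)^(2m) ≤ 1`.
-/

open scoped RealInnerProductSpace
open Polynomial Module.End

lemma mul_one_sub_pow_two_mul_le {t : ℝ} (h0 : 0 ≤ t) (h1 : t ≤ 1) (m : ℕ) :
    t * (1 - t) ^ (2 * m) ≤ (1 + 2 * (m : ℝ))⁻¹ := by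
  rw [← one_div, le_div_iff₀ (by positivity)]
  have h_pow_nonneg : 0 ≤ (1 - t) ^ (2 * m) := pow_nonneg (by linarith) _
  calc t * (1 - t) ^ (2 * m) * (1 + 2 * m)
      ≤ (1 + (2 * m : ℕ) * t) * (1 - t) ^ (2 * m) := by push_cast; nlinarith
    _ ≤ (1 + t) ^ (2 * m) * (1 - t) ^ (2 * m) :=
        mul_le_mul_of_nonneg_right (one_add_mul_le_pow (by linarith) _) h_pow_nonneg
    _ = (1 - t ^ 2) ^ (2 * m) := by rw [← mul_pow]; ring
    _ ≤ 1 := pow_le_one₀ (by nlinarith) (by nlinarith)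

section

variable {V : Type*} [NormedAddCommGroup V] [InnerProductSpace ℝ V]

lemma Module.End.HasEigenvalue.le_of_inner_le {T : V →ₗ[ℝ] V} {μ Λ : ℝ}
    (hμ : HasEigenvalue T μ) (h : ∀ x, ⟪T x, x⟫ ≤ Λ * ⟪x, x⟫) : μ ≤ Λ := by
  obtain ⟨x, hx, hx0⟩ := hμ.exists_hasEigenvector
  have hx_pos : 0 < ⟪x, x⟫ := real_inner_self_pos.mpr hx0
  have hTx := h x
  rw [mem_eigenspace_iff.mp hx, real_inner_smul_left] at hTx
  exact le_of_mul_le_mul_right hTx hx_pos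

lemma LinearMap.IsSymmetric.inner_aeval_apply_self_le [FiniteDimensional ℝ V] {A : V →ₗ[ℝ] V}
    (hA : A.IsSymmetric) (p : ℝ[X]) {c : ℝ} (hc : ∀ μ, HasEigenvalue A μ → p.eval μ ≤ c)
    (v : V) : ⟪aeval A p v, v⟫ ≤ c * ‖v‖ ^ 2 := by
  set b := hA.eigenvectorBasis rfl
  have hb : ∀ i, aeval A p (b i) = p.eval (hA.eigenvalues rfl i) • b i := fun i =>
    aeval_apply_of_hasEigenvector (hA.hasEigenvector_eigenvectorBasis rfl i)
  calc ⟪aeval A p v, v⟫ = ∑ i, p.eval (hA.eigenvalues rfl i) * ⟪b i, v⟫ ^ 2 := by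
        nth_rw 1 [← b.sum_repr' v]
        simp only [map_sum, map_smul, hb, sum_inner, real_inner_smul_left]
        exact Finset.sum_congr rfl fun i _ => by ring
    _ ≤ ∑ i, c * ⟪b i, v⟫ ^ 2 := by
        gcongr with i
        exact hc _ (hA.hasEigenvalue_eigenvalues rfl i)
    _ = c * ‖v‖ ^ 2 := by rw [← Finset.mul_sum, b.sum_sq_inner_right]

end

/-- Smoothing property (case `s = 1`, `t = 0`): if `A` is a self-adjoint positive semidefinite
operator on a finite-dimensional real inner product space, `Λ > 0` with
`⟪A v, v⟫ ≤ Λ ⟪v, v⟫` for all `v`, and `G = id - Λ⁻¹ • A`, then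
`⟪A (G^m v), G^m v⟫ ≤ Λ (1 + 2m)⁻¹ ‖v‖²` for every `m` and `v`. -/
theorem richardson_smoothing_one_zero
    {V : Type*} [NormedAddCommGroup V] [InnerProductSpace ℝ V] [FiniteDimensional ℝ V]
    (A : V →ₗ[ℝ] V) (hA : LinearMap.IsSymmetric A)
    (hA_pos : ∀ v : V, 0 ≤ ⟪A v, v⟫)
    (Λ : ℝ) (hΛ : 0 < Λ) (hΛ_ub : ∀ v : V, ⟪A v, v⟫ ≤ Λ * ⟪v, v⟫)
    (G : V →ₗ[ℝ] V) (hG : G = LinearMap.id - Λ⁻¹ • A)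
    (m : ℕ) (v : V) :
    ⟪A ((G ^ m) v), (G ^ m) v⟫ ≤ Λ * (1 + 2 * (m : ℝ))⁻¹ * ‖v‖ ^ 2 := by
  set q : ℝ[X] := 1 - C Λ⁻¹ * X
  have hGq : G = aeval A q := by
    ext x; simp [q, hG, Module.algebraMap_end_apply]
  have hG_symm : G.IsSymmetric := hG ▸ LinearMap.IsSymmetric.id.sub (hA.smul (conj_trivial _))
  have hGAG : (G ^ m) (A ((G ^ m) v)) = aeval A (q ^ m * X * q ^ m) v := by
    simp [hGq, map_mul, map_pow]
  rw [← hG_symm.pow m, hGAG]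
  refine hA.inner_aeval_apply_self_le _ (fun μ hμ => ?_) v
  have hμ_nonneg : 0 ≤ μ :=
    eigenvalue_nonneg_of_nonneg hμ fun x => by simpa [real_inner_comm] using hA_pos x
  have hμ_le : μ ≤ Λ := hμ.le_of_inner_le hΛ_ub
  have h_scalar := mul_one_sub_pow_two_mul_le (div_nonneg hμ_nonneg hΛ.le)
    ((div_le_one hΛ).mpr hμ_le) m
  calc (q ^ m * X * q ^ m).eval μ = Λ * (μ / Λ * (1 - μ / Λ) ^ (2 * m)) := by
        simp only [eval_mul, eval_pow, eval_sub, eval_one, eval_C, eval_X, q]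
        field_simp
        ring
    _ ≤ Λ * (1 + 2 * (m : ℝ))⁻¹ := by gcongr
end

section
/- Let V be a finite-dimensional real inner product space, A : V → V a self-adjoint positive semidefinite linear operator, Λ > 0 with ⟨A v, v⟩ ≤ Λ ⟨v, v⟩ for all v ∈ V, and G = id − Λ⁻¹ A. Then for every m ∈ ℕ and every v ∈ V, ‖A (G^m v)‖² ≤ Λ² (1 + m)⁻² ‖v‖². -/
/-!
In an orthonormal eigenbasis of `A`, with eigenvalues `λ ∈ [0, Λ]`, the operator `A Gᵐ` acts
diagonally by `λ (1 - λ/Λ)ᵐ = Λ x (1 - x)ᵐ` with `x = λ/Λ ∈ [0, 1]`, and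
`x (1 - x)ᵐ ≤ (1 + m)⁻¹` on `[0, 1]`.
-/

open scoped RealInnerProductSpace InnerProductSpace

open Polynomial

theorem mul_one_sub_pow_le_inv_one_add {x : ℝ} (hx₀ : 0 ≤ x) (hx₁ : x ≤ 1) (m : ℕ) :
    x * (1 - x) ^ m ≤ (1 + (m : ℝ))⁻¹ := by
  rw [← one_div, le_div_iff₀ (by positivity)]
  -- `x ∑_{k ≤ m} (1 - x)^k = 1 - (1 - x)^(m+1)`, and each term of the sum is at least `(1 - x)^m`.
  have hsum : ((m : ℝ) + 1) * (1 - x) ^ m ≤ ∑ k ∈ Finset.range (m + 1), (1 - x) ^ k := by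
    calc ((m : ℝ) + 1) * (1 - x) ^ m = ∑ _k ∈ Finset.range (m + 1), (1 - x) ^ m := by
          rw [Finset.sum_const, Finset.card_range, nsmul_eq_mul]; push_cast; ring
      _ ≤ ∑ k ∈ Finset.range (m + 1), (1 - x) ^ k :=
          Finset.sum_le_sum fun k hk => pow_le_pow_of_le_one (by linarith) (by linarith)
            (Finset.mem_range_succ_iff.mp hk)
  have hgeom := mul_neg_geom_sum (1 - x) (m + 1)
  have hpow : 0 ≤ (1 - x) ^ (m + 1) := pow_nonneg (by linarith) _
  calc x * (1 - x) ^ m * (1 + (m : ℝ)) = x * (((m : ℝ) + 1) * (1 - x) ^ m) := by ring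
    _ ≤ x * ∑ k ∈ Finset.range (m + 1), (1 - x) ^ k := mul_le_mul_of_nonneg_left hsum hx₀
    _ ≤ 1 := by rw [sub_sub_cancel] at hgeom; linarith

namespace OrthonormalBasis

variable {ι 𝕜 E : Type*} [RCLike 𝕜] [NormedAddCommGroup E] [InnerProductSpace 𝕜 E] [Fintype ι]

theorem norm_apply_sq_le_of_apply_eq_smul (b : OrthonormalBasis ι 𝕜 E) {T : E →ₗ[𝕜] E}
    {μ : ι → 𝕜} (hT : ∀ i, T (b i) = μ i • b i) {C : ℝ} (hμ : ∀ i, ‖μ i‖ ≤ C) (v : E) :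
    ‖T v‖ ^ 2 ≤ C ^ 2 * ‖v‖ ^ 2 := by
  have hTv : T v = ∑ i, (μ i * ⟪b i, v⟫_𝕜) • b i := by
    conv_lhs => rw [← b.sum_repr' v]
    simp only [map_sum, map_smul, hT, smul_smul, mul_comm]
  have hcoord (i : ι) : ⟪b i, T v⟫_𝕜 = μ i * ⟪b i, v⟫_𝕜 := by
    rw [hTv, b.orthonormal.inner_right_fintype]
  rw [← b.sum_sq_norm_inner_right, ← b.sum_sq_norm_inner_right, Finset.mul_sum]
  refine Finset.sum_le_sum fun i _ => ?_
  rw [hcoord, norm_mul, mul_pow]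
  gcongr
  exact hμ i

end OrthonormalBasis

namespace LinearMap.IsSymmetric

variable {𝕜 E : Type*} [RCLike 𝕜] [NormedAddCommGroup E] [InnerProductSpace 𝕜 E]
  [FiniteDimensional 𝕜 E] {T : E →ₗ[𝕜] E}

theorem norm_aeval_apply_sq_le (hT : T.IsSymmetric) {n : ℕ} (hn : Module.finrank 𝕜 E = n)
    (p : 𝕜[X]) {C : ℝ} (hp : ∀ i, ‖p.eval (hT.eigenvalues hn i : 𝕜)‖ ≤ C) (v : E) :
    ‖aeval T p v‖ ^ 2 ≤ C ^ 2 * ‖v‖ ^ 2 :=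
  (hT.eigenvectorBasis hn).norm_apply_sq_le_of_apply_eq_smul
    (fun i => Module.End.aeval_apply_of_mem_apply_eq_smul (hT.apply_eigenvectorBasis hn i)) hp v

theorem eigenvalues_le_s6 (hT : T.IsSymmetric) {n : ℕ} (hn : Module.finrank 𝕜 E = n) {Λ : ℝ}
    (hΛ : ∀ v, RCLike.re ⟪T v, v⟫_𝕜 ≤ Λ * ‖v‖ ^ 2) (i : Fin n) : hT.eigenvalues hn i ≤ Λ := by
  simpa [inner_smul_left, RCLike.smul_re, inner_self_eq_norm_sq] using
    hΛ (hT.eigenvectorBasis hn i)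

end LinearMap.IsSymmetric

/-- Smoothing property (case `s = 2`, `t = 0`): if `A` is a self-adjoint positive semidefinite
operator on a finite-dimensional real inner product space, `Λ > 0` with
`⟪A v, v⟫ ≤ Λ ⟪v, v⟫` for all `v`, and `G = id - Λ⁻¹ • A`, then
`‖A (G^m v)‖² ≤ Λ² (1 + m)⁻² ‖v‖²` for every `m` and `v`. -/
theorem richardson_smoothing_two_zero
    {V : Type*} [NormedAddCommGroup V] [InnerProductSpace ℝ V] [FiniteDimensional ℝ V]
    (A : V →ₗ[ℝ] V) (hA : LinearMap.IsSymmetric A)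
    (hA_pos : ∀ v : V, 0 ≤ ⟪A v, v⟫)
    (Λ : ℝ) (hΛ : 0 < Λ) (hΛ_ub : ∀ v : V, ⟪A v, v⟫ ≤ Λ * ⟪v, v⟫)
    (G : V →ₗ[ℝ] V) (hG : G = LinearMap.id - Λ⁻¹ • A)
    (m : ℕ) (v : V) :
    ‖A ((G ^ m) v)‖ ^ 2 ≤ Λ ^ 2 * ((1 + (m : ℝ)) ^ 2)⁻¹ * ‖v‖ ^ 2 := by
  have hAG : A ((G ^ m) v) = aeval A (X * (1 - C Λ⁻¹ * X) ^ m) v := by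
    rw [hG, ← Module.End.one_eq_id]
    simp [Module.End.mul_apply, ← Algebra.smul_def]
  have hApos : A.IsPositive := ⟨hA, hA_pos⟩
  have ht₀ := hApos.nonneg_eigenvalues rfl
  have htΛ := hA.eigenvalues_le_s6 rfl
    (by simpa only [real_inner_self_eq_norm_sq, RCLike.re_to_real] using hΛ_ub)
  rw [hAG, ← inv_pow, ← mul_pow]
  refine hA.norm_aeval_apply_sq_le rfl _ (fun i => ?_) v
  set t := hA.eigenvalues rfl i
  have hx : Λ⁻¹ * t ≤ 1 := by rw [inv_mul_le_iff₀ hΛ, mul_one]; exact htΛ i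
  have hbound := mul_one_sub_pow_le_inv_one_add (by positivity [ht₀ i]) hx m
  have hnonneg : 0 ≤ t * (1 - Λ⁻¹ * t) ^ m := mul_nonneg (ht₀ i) (pow_nonneg (by linarith) m)
  rw [RCLike.ofReal_real_eq_id, id, eval_mul, eval_pow, eval_sub, eval_mul, eval_C, eval_X,
    eval_one, Real.norm_of_nonneg hnonneg]
  calc t * (1 - Λ⁻¹ * t) ^ m = Λ * (Λ⁻¹ * t * (1 - Λ⁻¹ * t) ^ m) := by field_simp
    _ ≤ Λ * (1 + (m : ℝ))⁻¹ := mul_le_mul_of_nonneg_left hbound hΛ.le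
end
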